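/- arXiv:1307.1029 — 3 statements merged into one kernel-verified Lean document; each statement's English description precedes it below -/
import Mathlib

section
/- Let X be a topological space and let 𝒰 be a locally finite family of subsets of X whose union is all of X. Then there exists a subfamily 𝒱 ⊆ 𝒰 which still covers X and which is irreducible, i.e., no proper subfamily of 𝒱 covers X. -/
/-!
By Zorn's lemma it suffices that the intersection of a nonempty chain of subcovers is again a
cover. Given a point `x`, every member of the chain meets the finite set of members of `𝒰`
containing `x`; the complements of the members of the chain form a directed family, so they
cannot cover that finite set, and some set containing `x` lies in every member of the chain.
-/

open Set

def PointFinite {α : Type*} (𝒰 : Set (Set α)) : Prop :=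
  ∀ x, {U ∈ 𝒰 | x ∈ U}.Finite

theorem LocallyFinite.pointFinite {X : Type*} [TopologicalSpace X] {𝒰 : Set (Set X)}
    (hlf : LocallyFinite (fun U : 𝒰 => (U : Set X))) : PointFinite 𝒰 := fun x =>
  ((hlf.point_finite x).image Subtype.val).subset fun U ⟨hU, hxU⟩ => ⟨⟨U, hU⟩, hxU, rfl⟩

theorem IsChain.inter_sInter_nonempty_of_finite {α : Type*} {c : Set (Set α)}
    (hchain : IsChain (· ⊆ ·) c) (hne : c.Nonempty) {F : Set α} (hF : F.Finite)
    (hmeet : ∀ s ∈ c, (F ∩ s).Nonempty) : (F ∩ ⋂₀ c).Nonempty := by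
  by_contra hempty
  have hFsub : F ⊆ ⋃₀ (compl '' c) := by
    rw [← compl_sInter]
    exact fun a haF hac => hempty ⟨a, haF, hac⟩
  have hdir : DirectedOn (· ⊆ ·) (compl '' c) := by
    rintro _ ⟨s, hs, rfl⟩ _ ⟨t, ht, rfl⟩
    rcases hchain.total hs ht with h | h
    · exact ⟨sᶜ, mem_image_of_mem _ hs, subset_rfl, compl_subset_compl.mpr h⟩
    · exact ⟨tᶜ, mem_image_of_mem _ ht, compl_subset_compl.mpr h, subset_rfl⟩
  obtain ⟨_, ⟨s, hs, rfl⟩, hFs⟩ :=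
    hdir.exists_mem_subset_of_finite_of_subset_sUnion (hne.image _) hF hFsub
  obtain ⟨a, haF, has⟩ := hmeet s hs
  exact hFs haF has

theorem PointFinite.sUnion_sInter_eq_univ_of_isChain {α : Type*} {𝒰 : Set (Set α)}
    (hfin : PointFinite 𝒰) {c : Set (Set (Set α))} (hc : c ⊆ {𝒱 | 𝒱 ⊆ 𝒰 ∧ ⋃₀ 𝒱 = univ})
    (hchain : IsChain (· ⊆ ·) c) (hne : c.Nonempty) : ⋃₀ ⋂₀ c = univ := by
  refine sUnion_eq_univ_iff.mpr fun x => ?_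
  obtain ⟨U, ⟨-, hxU⟩, hUc⟩ := hchain.inter_sInter_nonempty_of_finite hne (hfin x) fun 𝒱 h𝒱 => by
    obtain ⟨U, hU, hxU⟩ := sUnion_eq_univ_iff.mp (hc h𝒱).2 x
    exact ⟨U, ⟨(hc h𝒱).1 hU, hxU⟩, hU⟩
  exact ⟨U, hUc, hxU⟩

theorem PointFinite.exists_minimal_subcover {α : Type*} {𝒰 : Set (Set α)} (hfin : PointFinite 𝒰)
    (hcov : ⋃₀ 𝒰 = univ) : ∃ 𝒱, Minimal (fun 𝒱 => 𝒱 ⊆ 𝒰 ∧ ⋃₀ 𝒱 = univ) 𝒱 := by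
  refine zorn_superset _ fun c hc hchain => ?_
  rcases c.eq_empty_or_nonempty with rfl | ⟨𝒱, h𝒱⟩
  · exact ⟨𝒰, ⟨subset_rfl, hcov⟩, by simp⟩
  refine ⟨⋂₀ c, ⟨(sInter_subset_of_mem h𝒱).trans (hc h𝒱).1, ?_⟩, fun _ => sInter_subset_of_mem⟩
  exact hfin.sUnion_sInter_eq_univ_of_isChain hc hchain ⟨𝒱, h𝒱⟩

/-- **Irreducible subcovers of locally finite covers.**
If `𝒰` is a locally finite family of subsets of a topological space `X` whose union
is all of `X`, then there is a subfamily `𝒱 ⊆ 𝒰` which still covers `X` and which is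
irreducible: no proper subfamily of `𝒱` covers `X`. -/
theorem exists_irreducible_subcover_of_locallyFinite
    {X : Type*} [TopologicalSpace X] (𝒰 : Set (Set X))
    (hlf : LocallyFinite (fun U : 𝒰 => (U : Set X)))
    (hcov : ⋃₀ 𝒰 = Set.univ) :
    ∃ 𝒱 ⊆ 𝒰, ⋃₀ 𝒱 = Set.univ ∧ ∀ 𝒲, 𝒲 ⊂ 𝒱 → ⋃₀ 𝒲 ≠ Set.univ := by
  obtain ⟨𝒱, hmin⟩ := hlf.pointFinite.exists_minimal_subcover hcov
  refine ⟨𝒱, hmin.prop.1, hmin.prop.2, fun 𝒲 h𝒲 h𝒲cov => ?_⟩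
  exact hmin.not_prop_of_lt h𝒲 ⟨h𝒲.subset.trans hmin.prop.1, h𝒲cov⟩
end

section
/- Let X be a proper metric space and let 𝒰 be a uniformly bounded irreducible open cover of X. Then every bounded subset B of X meets only finitely many members of 𝒰; in particular each member U ∈ 𝒰 intersects only finitely many other elements of 𝒰. -/
/-!
Irreducibility gives every member `U` of the cover a private point, lying in `U` and in no
other member. A member meeting a bounded set `B` lies in the `a`-thickening of `B`, which is
compact since `X` is proper. Finitely many members cover that compact set, and each of them
contains the private point of at most one member, so only finitely many members meet `B`.
-/

open Set Metric

theorem exists_mem_forall_eq_of_irreducible_cover {X : Type*} {𝒰 : Set (Set X)}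
    (hcov : ⋃₀ 𝒰 = univ) (hirr : ∀ 𝒱, 𝒱 ⊂ 𝒰 → ⋃₀ 𝒱 ≠ univ) {U : Set X} (hU : U ∈ 𝒰) :
    ∃ x ∈ U, ∀ V ∈ 𝒰, x ∈ V → V = U := by
  by_contra! hshared
  refine hirr (𝒰 \ {U}) (sdiff_singleton_ssubset.2 hU) (eq_univ_of_forall fun x => ?_)
  obtain ⟨V, hV, hxV⟩ := mem_sUnion.1 (hcov ▸ mem_univ x)
  by_cases hVU : V = U
  · obtain ⟨W, hW, hxW, hWU⟩ := hshared x (hVU ▸ hxV)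
    exact ⟨W, ⟨hW, hWU⟩, hxW⟩
  · exact ⟨V, ⟨hV, hVU⟩, hxV⟩

theorem IsCompact.finite_setOf_exists_mem_forall_eq {X : Type*} [TopologicalSpace X]
    {𝒰 : Set (Set X)} {K : Set X} (hK : IsCompact K) (hopen : ∀ U ∈ 𝒰, IsOpen U)
    (hK𝒰 : K ⊆ ⋃₀ 𝒰) :
    {U ∈ 𝒰 | ∃ x ∈ K, ∀ V ∈ 𝒰, x ∈ V → V = U}.Finite := by
  obtain ⟨𝒱, h𝒱𝒰, h𝒱, hK𝒱⟩ :=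
    hK.elim_finite_subcover_image (c := id) hopen (sUnion_eq_biUnion ▸ hK𝒰)
  refine h𝒱.subset fun U ⟨_, x, hxK, hx⟩ => ?_
  obtain ⟨W, hW, hxW⟩ := mem_iUnion₂.1 (hK𝒱 hxK)
  exact hx W (h𝒱𝒰 hW) hxW ▸ hW

theorem subset_cthickening_of_ediam_le {X : Type*} [PseudoMetricSpace X] {U B : Set X}
    {a : ℝ} (hUB : (U ∩ B).Nonempty) (hU : ediam U ≤ ENNReal.ofReal a) :
    U ⊆ cthickening a B := fun _ hy =>
  let ⟨_, hbU, hbB⟩ := hUB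
  mem_cthickening_iff.2 <| (infEDist_le_edist_of_mem hbB).trans <|
    (edist_le_ediam_of_mem hy hbU).trans hU

/-- **Bounded sets meet only finitely many members of a uniformly bounded irreducible
open cover.** Let `X` be a proper metric space and `𝒰` a uniformly bounded irreducible
open cover of `X`.  Then every bounded subset `B` of `X` meets only finitely many
members of `𝒰`; in particular each member `U ∈ 𝒰` intersects only finitely many other
elements of `𝒰`. -/
theorem bounded_meets_finitely_many_of_irreducible
    {X : Type*} [MetricSpace X] [ProperSpace X] (𝒰 : Set (Set X))
    (hopen : ∀ U ∈ 𝒰, IsOpen U)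
    (hbdd : ∃ a > (0 : ℝ), ∀ U ∈ 𝒰, EMetric.diam U ≤ ENNReal.ofReal a)
    (hcov : ⋃₀ 𝒰 = Set.univ)
    (hirr : ∀ 𝒱, 𝒱 ⊂ 𝒰 → ⋃₀ 𝒱 ≠ Set.univ) :
    (∀ B : Set X, Bornology.IsBounded B → {U ∈ 𝒰 | (U ∩ B).Nonempty}.Finite) ∧
      ∀ U ∈ 𝒰, {V ∈ 𝒰 | V ≠ U ∧ (V ∩ U).Nonempty}.Finite := by
  obtain ⟨a, -, hdiam⟩ := hbdd
  have hbounded : ∀ B : Set X, Bornology.IsBounded B →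
      {U ∈ 𝒰 | (U ∩ B).Nonempty}.Finite := fun B hB => by
    have hK : IsCompact (cthickening a B) :=
      isCompact_of_isClosed_isBounded isClosed_cthickening hB.cthickening
    refine (hK.finite_setOf_exists_mem_forall_eq hopen (hcov ▸ subset_univ _)).subset ?_
    rintro U ⟨hU, hUB⟩
    obtain ⟨x, hxU, hx⟩ := exists_mem_forall_eq_of_irreducible_cover hcov hirr hU
    exact ⟨hU, x, subset_cthickening_of_ediam_le hUB (hdiam U hU) hxU, hx⟩
  refine ⟨hbounded, fun U hU => (hbounded U ?_).subset fun V hV => ⟨hV.1, hV.2.2⟩⟩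
  exact isBounded_iff_ediam_ne_top.2 (ne_top_of_le_ne_top ENNReal.ofReal_ne_top (hdiam U hU))
end

section
/- Let g : X → Y be a continuous proper map between metric spaces with Y a proper metric space. Then for every y ∈ Y and every ε > 0 there is a neighborhood V of y in Y such that diam(g⁻¹(V)) ≤ diam(g⁻¹(y)) + ε. -/
/-! A continuous proper map into a metric space is a closed map, so the neighbourhoods of the
fibre `g⁻¹ {y}` are exactly the preimages of neighbourhoods of `y`. Applied to the
`ε / 2`-thickening of the fibre, whose diameter exceeds that of the fibre by at most `ε`,
this gives the neighbourhood `V`. -/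

open Metric Filter Topology
open scoped NNReal

theorem IsClosedMap.exists_mem_nhds_ediam_preimage_le {X Y : Type*} [PseudoEMetricSpace X]
    [TopologicalSpace Y] {g : X → Y} (hg : IsClosedMap g) (y : Y) {ε : ℝ≥0} (hε : 0 < ε) :
    ∃ V ∈ 𝓝 y, ediam (g ⁻¹' V) ≤ ediam (g ⁻¹' {y}) + ε := by
  have hthick : thickening (ε / 2 : ℝ≥0) (g ⁻¹' {y}) ∈ comap g (𝓝 y) :=
    hg.comap_nhds_le (thickening_mem_nhdsSet _ (by positivity))
  obtain ⟨V, hV, hsub⟩ := mem_comap.1 hthick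
  refine ⟨V, hV, (ediam_mono hsub).trans ((ediam_thickening_le _).trans_eq ?_)⟩
  rw [ENNReal.coe_div two_ne_zero, ENNReal.coe_two,
    ENNReal.mul_div_cancel two_ne_zero ENNReal.ofNat_ne_top]

theorem exists_nhd_preimage_diam_le_general
    {X Y : Type*} [MetricSpace X] [MetricSpace Y] (g : X → Y)
    (hcont : Continuous g)
    (hproper : ∀ K : Set Y, IsCompact K → IsCompact (g ⁻¹' K)) :
    ∀ y : Y, ∀ ε > (0 : ℝ), ∃ V ∈ nhds y,
      EMetric.diam (g ⁻¹' V) ≤ EMetric.diam (g ⁻¹' {y}) + ENNReal.ofReal ε := by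
  intro y ε hε
  have hclosed : IsClosedMap g :=
    (isProperMap_iff_isCompact_preimage.2 ⟨hcont, fun K hK ↦ hproper K hK⟩).isClosedMap
  exact hclosed.exists_mem_nhds_ediam_preimage_le y (Real.toNNReal_pos.2 hε)

/-- **Neighborhoods with preimages of almost-minimal diameter.**
Let `g : X → Y` be a continuous proper map between metric spaces with `Y` a proper
metric space.  Then for every `y ∈ Y` and every `ε > 0` there is a neighborhood `V`
of `y` in `Y` such that `diam (g⁻¹ V) ≤ diam (g⁻¹ y) + ε`. -/
theorem exists_nhd_preimage_diam_le
    {X Y : Type*} [MetricSpace X] [MetricSpace Y] [ProperSpace Y] (g : X → Y)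
    (hcont : Continuous g)
    (hproper : ∀ K : Set Y, IsCompact K → IsCompact (g ⁻¹' K)) :
    ∀ y : Y, ∀ ε > (0 : ℝ), ∃ V ∈ nhds y,
      EMetric.diam (g ⁻¹' V) ≤ EMetric.diam (g ⁻¹' {y}) + ENNReal.ofReal ε :=
  exists_nhd_preimage_diam_le_general g hcont hproper
end
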